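/- arXiv:2312.06471 — 8 statements merged into one kernel-verified Lean document; each statement's English description precedes it below -/
import Mathlib

section
/- In the model M ⊛_a U resulting from an a priori belief update U = (M^a, U^a, M^{¬a}, ↦) applied by agent a to an introspective pointed model (M, v) with R_a(v) = ∅, the relation R'_a is transitive and euclidean. -/
structure KripkeModel (Agent AP W : Type) where
  R : Agent → W → W → Prop
  V : AP → W → Prop

def EuclideanRel {W : Type} (R : W → W → Prop) : Prop :=
  ∀ {w v u : W}, R w v → R w u → R v u

def Introspective {Agent AP W : Type} (M : KripkeModel Agent AP W) : Prop :=
  ∀ i, Transitive (M.R i) ∧ EuclideanRel (M.R i)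

def QuasiEpistemic {Agent AP W : Type} (M : KripkeModel Agent AP W) : Prop :=
  ∀ i, Transitive (M.R i) ∧ Symmetric (M.R i)

inductive Formula (Agent AP : Type) : Type
  | atom : AP → Formula Agent AP
  | bot : Formula Agent AP
  | neg : Formula Agent AP → Formula Agent AP
  | and : Formula Agent AP → Formula Agent AP → Formula Agent AP
  | box : Agent → Formula Agent AP → Formula Agent AP

def truth {Agent AP W : Type} (M : KripkeModel Agent AP W) : W → Formula Agent AP → Prop
  | w, .atom p => M.V p w
  | _, .bot => False
  | w, .neg φ => ¬ truth M w φ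
  | w, .and φ ψ => truth M w φ ∧ truth M w ψ
  | w, .box i φ => ∀ u, M.R i w u → truth M u φ

def Propositional {Agent AP : Type} : Formula Agent AP → Prop
  | .atom _ => True
  | .bot => True
  | .neg φ => Propositional φ
  | .and φ ψ => Propositional φ ∧ Propositional ψ
  | .box _ _ => False

def onlyAgents {Agent AP : Type} (S : Set Agent) : Formula Agent AP → Prop
  | .atom _ => True
  | .bot => True
  | .neg φ => onlyAgents S φ
  | .and φ ψ => onlyAgents S φ ∧ onlyAgents S ψ
  | .box i φ => i ∈ S ∧ onlyAgents S φ

structure APBUpdate (Agent AP Wa Wna : Type) (a : Agent) where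
  Ma : KripkeModel Agent AP Wa
  Ua : Set Wa
  Mna : KripkeModel Agent AP Wna
  corr : Wa → Option Wna
  quasiMa : QuasiEpistemic Ma
  quasiMna : QuasiEpistemic Mna
  Ua_nonempty : Ua.Nonempty
  Ua_cluster : ∀ u ∈ Ua, ∀ v, Ma.R a u v ↔ v ∈ Ua
  atomic : ∀ u u', corr u = some u' → ∀ p, (Ma.V p u ↔ Mna.V p u')
  reasoning : ∀ b, b ≠ a → ∀ u u' v v', corr u = some u' → corr v = some v' →
      (Ma.R b u v ↔ Mna.R b u' v')
  simulation : ∀ b, b ≠ a → ∀ u u' v', corr u = some u' → Mna.R b u' v' →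
      ∃ v, Ma.R b u v ∧ corr v = some v'

def updatedModel {Agent AP W Wa Wna : Type} (a : Agent)
    (M : KripkeModel Agent AP W) (v : W) (U : APBUpdate Agent AP Wa Wna a) :
    KripkeModel Agent AP (W ⊕ (↥U.Ua ⊕ Wna)) where
  R i x y :=
    match x, y with
    | .inl w, .inl w' => M.R i w w'
    | .inl w, .inr (.inl _) => i = a ∧ w = v
    | .inr (.inl _), .inr (.inl _) => i = a
    | .inr (.inl u), .inr (.inr n') => i ≠ a ∧ ∃ z, U.Ma.R i u.1 z ∧ U.corr z = some n'
    | .inr (.inr n), .inr (.inr n') => U.Mna.R i n n'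
    | _, _ => False
  V p x :=
    match x with
    | .inl w => M.V p w
    | .inr (.inl u) => U.Ma.V p u.1
    | .inr (.inr n) => U.Mna.V p n

def pubAnnounce {Agent AP W : Type} (M : KripkeModel Agent AP W) (φ : Formula Agent AP) :
    KripkeModel Agent AP {w : W // truth M w φ} where
  R i x y := M.R i x.1 y.1
  V p x := M.V p x.1

def aPart {X Y Z : Type} : (X ⊕ (Y ⊕ Z)) → Prop
  | .inl _ => False
  | .inr _ => True

def privAnnounce {Agent AP X Y Z : Type} (M : KripkeModel Agent AP (X ⊕ (Y ⊕ Z)))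
    (φ : Formula Agent AP) : KripkeModel Agent AP (X ⊕ (Y ⊕ Z)) where
  R i x y := M.R i x y ∧ (aPart x → truth M x φ) ∧ (aPart y → truth M y φ)
  V := M.V

theorem stmt7 {Agent AP W Wa Wna : Type} (a : Agent) (M : KripkeModel Agent AP W) (v : W)
    (U : APBUpdate Agent AP Wa Wna a) (hM : Introspective M) (hv : ∀ w, ¬ M.R a v w) :
    Transitive ((updatedModel a M v U).R a) ∧ EuclideanRel ((updatedModel a M v U).R a) := by
  obtain ⟨htM, heM⟩ := hM a
  obtain ⟨htN, hsN⟩ := U.quasiMna a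
  constructor
  · intro x y z hxy hyz
    rcases x with w | (u | n) <;> rcases y with w' | (u' | n') <;>
      rcases z with w'' | (u'' | n'') <;>
      simp only [updatedModel] at hxy hyz ⊢ <;>
      first
        | trivial
        | exact htM hxy hyz
        | exact htN hxy hyz
        | exact hxy
        | exact absurd hxy.1 (fun h => h rfl)
        | exact absurd hyz.1 (fun h => h rfl)
        | exact (hv _ (heM (hyz ▸ hxy) (hyz ▸ hxy))).elim
        | exact (hv _ (heM (hyz.2 ▸ hxy) (hyz.2 ▸ hxy))).elim
  · intro x y z hxy hxz
    rcases x with w | (u | n) <;> rcases y with w' | (u' | n') <;>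
      rcases z with w'' | (u'' | n'') <;>
      simp only [updatedModel] at hxy hxz ⊢ <;>
      first
        | trivial
        | exact heM hxy hxz
        | exact htN (hsN hxy) hxz
        | exact absurd hxy.1 (fun h => h rfl)
        | exact absurd hxz.1 (fun h => h rfl)
        | exact (hv _ (hxz ▸ hxy)).elim
        | exact (hv _ (hxy ▸ hxz)).elim
        | exact hv _ (hxy ▸ hxz)
        | exact hv _ (hxz ▸ hxy)
        | exact (hv _ (hxz.2 ▸ hxy)).elim
        | exact hv _ (hxy.2 ▸ hxz)
end

section
/- In the model M ⊛_a U resulting from an a priori belief update applied by agent a, for every agent b ≠ a the relation R'_b is transitive and euclidean; hence M ⊛_a U is an introspective model. -/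
theorem stmt8 {Agent AP W Wa Wna : Type} (a : Agent) (M : KripkeModel Agent AP W) (v : W)
    (U : APBUpdate Agent AP Wa Wna a) (hM : Introspective M) (hv : ∀ w, ¬ M.R a v w) :
    (∀ b, b ≠ a → Transitive ((updatedModel a M v U).R b) ∧
        EuclideanRel ((updatedModel a M v U).R b)) ∧
    Introspective (updatedModel a M v U) := by
  have key : ∀ i, Transitive ((updatedModel a M v U).R i) ∧
      EuclideanRel ((updatedModel a M v U).R i) := by
    intro i
    have Mtr := (hM i).1
    have Meu : EuclideanRel (M.R i) := (hM i).2
    have Matr := (U.quasiMa i).1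
    have Masy := (U.quasiMa i).2
    have Mntr := (U.quasiMna i).1
    have Mnsy := (U.quasiMna i).2
    constructor
    · intro x y z hxy hyz
      rcases x with w | u | n <;> rcases y with w' | u' | n' <;>
        rcases z with w'' | u'' | n'' <;>
        simp only [updatedModel] at hxy hyz ⊢ <;>
      first
      | exact hxy.elim
      | exact hyz.elim
      | exact Mtr hxy hyz
      | (obtain ⟨rfl, rfl⟩ := hyz; exact absurd (Meu hxy hxy) (hv _))
      | exact hxy
      | exact absurd hxy.1 hyz.1
      | exact absurd hxy hyz.1
      | (obtain ⟨hne, z1, hz1, hc1⟩ := hxy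
         obtain ⟨z2, hz2, hc2⟩ := U.simulation i hne z1 _ _ hc1 hyz
         exact ⟨hne, z2, Matr hz1 hz2, hc2⟩)
      | exact Mntr hxy hyz
    · intro x y z hxy hxz
      rcases x with w | u | n <;> rcases y with w' | u' | n' <;>
        rcases z with w'' | u'' | n'' <;>
        simp only [updatedModel] at hxy hxz ⊢ <;>
      first
      | exact hxy.elim
      | exact hxz.elim
      | exact Meu hxy hxz
      | (obtain ⟨rfl, rfl⟩ := hxz; exact absurd hxy (hv _))
      | (obtain ⟨rfl, rfl⟩ := hxy; exact absurd hxz (hv _))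
      | exact hxy
      | exact hxy.1
      | exact absurd hxy hxz.1
      | exact absurd hxz hxy.1
      | (obtain ⟨hne, z1, hz1, hc1⟩ := hxy
         obtain ⟨_, z2, hz2, hc2⟩ := hxz
         exact (U.reasoning i hne z1 _ z2 _ hc1 hc2).mp (Matr (Masy hz1) hz2))
      | exact Mntr (Mnsy hxy) hxz
  exact ⟨fun b _ => key b, key⟩
end

section
/- If R_a(v) = ∅ in M (so agent a's beliefs are inconsistent: M, v ⊨ B_a ⊥), then after any a priori belief update U by agent a, agent a's beliefs are consistent: M ⊛_a U, v ⊭ B_a ⊥. -/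
theorem stmt11 {Agent AP W Wa Wna : Type} (a : Agent) (M : KripkeModel Agent AP W) (v : W)
    (U : APBUpdate Agent AP Wa Wna a) (hM : Introspective M) (hv : ∀ w, ¬ M.R a v w) :
    truth M v (.box a .bot) ∧
    ¬ truth (updatedModel a M v U) (Sum.inl v) (.box a .bot) := by
  constructor
  · intro u hu; exact hv u hu
  · intro h
    obtain ⟨u, hu⟩ := U.Ua_nonempty
    exact h (Sum.inr (Sum.inl ⟨u, hu⟩)) ⟨rfl, rfl⟩
end

section
/- The identity relation on U^a is an a-bisimulation between the trial model M^a and the updated model M ⊛_a U, where an a-bisimulation requires matching valuations and forth/back conditions only for R_a transitions; consequently for any formula ψ built without modalities B_b for b ≠ a, and any u ∈ U^a, M^a, u ⊨ ψ iff M ⊛_a U, u ⊨ ψ. -/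
theorem stmt12 {Agent AP W Wa Wna : Type} (a : Agent) (M : KripkeModel Agent AP W) (v : W)
    (U : APBUpdate Agent AP Wa Wna a) (hM : Introspective M) (hv : ∀ w, ¬ M.R a v w) :
    (∀ u : ↥U.Ua, ∀ p, U.Ma.V p u.1 ↔ (updatedModel a M v U).V p (Sum.inr (Sum.inl u))) ∧
    (∀ u : ↥U.Ua, ∀ z, U.Ma.R a u.1 z → ∃ hz : z ∈ U.Ua,
        (updatedModel a M v U).R a (Sum.inr (Sum.inl u)) (Sum.inr (Sum.inl ⟨z, hz⟩))) ∧
    (∀ u : ↥U.Ua, ∀ y, (updatedModel a M v U).R a (Sum.inr (Sum.inl u)) y →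
        ∃ z : ↥U.Ua, y = Sum.inr (Sum.inl z) ∧ U.Ma.R a u.1 z.1) ∧
    (∀ ψ : Formula Agent AP, onlyAgents {a} ψ → ∀ u : ↥U.Ua,
        (truth U.Ma u.1 ψ ↔ truth (updatedModel a M v U) (Sum.inr (Sum.inl u)) ψ)) := by
  refine ⟨fun u p => Iff.rfl, ?_, ?_, ?_⟩
  · intro u z hz
    exact ⟨(U.Ua_cluster u.1 u.2 z).mp hz, rfl⟩
  · intro u y hy
    match y with
    | .inl w => exact absurd hy (by simp [updatedModel])
    | .inr (.inl z) => exact ⟨z, rfl, (U.Ua_cluster u.1 u.2 z.1).mpr z.2⟩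
    | .inr (.inr n) => exact absurd hy.1 (by simp)
  · intro ψ hψ
    induction ψ with
    | atom p => exact fun u => Iff.rfl
    | bot => exact fun u => Iff.rfl
    | neg φ ih => exact fun u => not_congr (ih hψ u)
    | and φ χ ih1 ih2 => exact fun u => and_congr (ih1 hψ.1 u) (ih2 hψ.2 u)
    | box i φ ih =>
      obtain ⟨hi, hφ⟩ := hψ
      rcases hi with rfl
      intro u
      constructor
      · intro h y hy
        match y with
        | .inl w => exact absurd hy (by simp [updatedModel])
        | .inr (.inl z) =>
          exact (ih hφ z).mp (h z.1 ((U.Ua_cluster u.1 u.2 z.1).mpr z.2))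
        | .inr (.inr n) => exact absurd hy.1 (by simp)
      · intro h z hz
        have hz' : z ∈ U.Ua := (U.Ua_cluster u.1 u.2 z).mp hz
        exact (ih hφ ⟨z, hz'⟩).mpr (h (Sum.inr (Sum.inl ⟨z, hz'⟩)) rfl)
end

section
/- The identity relation on W^{¬a} is a bisimulation between the backup model M^{¬a} and the updated model M ⊛_a U; hence for every formula φ and every world w ∈ W^{¬a}, M^{¬a}, w ⊨ φ iff M ⊛_a U, w ⊨ φ. -/
theorem stmt13 {Agent AP W Wa Wna : Type} (a : Agent) (M : KripkeModel Agent AP W) (v : W)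
    (U : APBUpdate Agent AP Wa Wna a) (hM : Introspective M) (hv : ∀ w, ¬ M.R a v w) :
    (∀ n : Wna, ∀ p, U.Mna.V p n ↔ (updatedModel a M v U).V p (Sum.inr (Sum.inr n))) ∧
    (∀ i : Agent, ∀ n z : Wna, U.Mna.R i n z →
        (updatedModel a M v U).R i (Sum.inr (Sum.inr n)) (Sum.inr (Sum.inr z))) ∧
    (∀ i : Agent, ∀ n : Wna, ∀ y, (updatedModel a M v U).R i (Sum.inr (Sum.inr n)) y →
        ∃ z : Wna, y = Sum.inr (Sum.inr z) ∧ U.Mna.R i n z) ∧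
    (∀ φ : Formula Agent AP, ∀ n : Wna,
        (truth U.Mna n φ ↔ truth (updatedModel a M v U) (Sum.inr (Sum.inr n)) φ)) := by
  refine ⟨fun n p => Iff.rfl, fun i n z h => h, ?_, ?_⟩
  · intro i n y h
    match y with
    | .inl w => exact absurd h (by simp [updatedModel])
    | .inr (.inl u) => exact absurd h (by simp [updatedModel])
    | .inr (.inr z) => exact ⟨z, rfl, h⟩
  · intro φ
    induction φ with
    | atom p => intro n; exact Iff.rfl
    | bot => intro n; exact Iff.rfl
    | neg ψ ih => intro n; exact not_congr (ih n)
    | and ψ χ ih1 ih2 => intro n; exact and_congr (ih1 n) (ih2 n)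
    | box i ψ ih =>
      intro n
      constructor
      · intro h y hy
        match y with
        | .inl w => exact absurd hy (by simp [updatedModel])
        | .inr (.inl u) => exact absurd hy (by simp [updatedModel])
        | .inr (.inr z) => exact (ih z).mp (h z hy)
      · intro h z hz
        exact (ih z).mpr (h _ hz)
end

section
/- The following are equivalent for a formula ψ not involving modalities B_b for b ≠ a: (i) M ⊛_a U, v ⊨ B_a ψ; (ii) M^a, u ⊨ ψ for all u ∈ U^a; (iii) M^a, u ⊨ B_a ψ for at least one u ∈ U^a. -/
lemma invar {Agent AP W Wa Wna : Type} (a : Agent) (M : KripkeModel Agent AP W) (v : W)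
    (U : APBUpdate Agent AP Wa Wna a) :
    ∀ (ψ : Formula Agent AP), onlyAgents {a} ψ → ∀ u : ↥U.Ua,
      (truth (updatedModel a M v U) (Sum.inr (Sum.inl u)) ψ ↔ truth U.Ma u.1 ψ) := by
  intro ψ
  induction ψ with
  | atom p => intro _ u; exact Iff.rfl
  | bot => intro _ u; exact Iff.rfl
  | neg φ ih => intro h u; exact not_congr (ih h u)
  | and φ χ ih1 ih2 => intro h u; exact and_congr (ih1 h.1 u) (ih2 h.2 u)
  | box i φ ih =>
    intro h u
    obtain ⟨hi, hφ⟩ := h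
    subst hi
    constructor
    · intro H w hw
      have hwU : w ∈ U.Ua := (U.Ua_cluster u.1 u.2 w).mp hw
      exact (ih hφ ⟨w, hwU⟩).mp (H (Sum.inr (Sum.inl ⟨w, hwU⟩)) rfl)
    · intro H y hy
      match y, hy with
      | Sum.inr (Sum.inl u'), _ =>
        exact (ih hφ u').mpr (H u'.1 ((U.Ua_cluster u.1 u.2 u'.1).mpr u'.2))
      | Sum.inr (Sum.inr n'), hy => exact absurd rfl hy.1

theorem stmt14 {Agent AP W Wa Wna : Type} (a : Agent) (M : KripkeModel Agent AP W) (v : W)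
    (U : APBUpdate Agent AP Wa Wna a) (hM : Introspective M) (hv : ∀ w, ¬ M.R a v w)
    (ψ : Formula Agent AP) (hψ : onlyAgents {a} ψ) :
    (truth (updatedModel a M v U) (Sum.inl v) (.box a ψ) ↔ ∀ u : ↥U.Ua, truth U.Ma u.1 ψ) ∧
    ((∀ u : ↥U.Ua, truth U.Ma u.1 ψ) ↔ ∃ u : ↥U.Ua, truth U.Ma u.1 (.box a ψ)) := by
  have inv := invar a M v U ψ hψ
  constructor
  · constructor
    · intro H u
      exact (inv u).mp (H (Sum.inr (Sum.inl u)) ⟨rfl, rfl⟩)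
    · intro H y hy
      match y, hy with
      | Sum.inl w, hy => exact absurd hy (hv w)
      | Sum.inr (Sum.inl u), _ => exact (inv u).mpr (H u)
  · constructor
    · intro H
      obtain ⟨u0, hu0⟩ := U.Ua_nonempty
      refine ⟨⟨u0, hu0⟩, ?_⟩
      intro w hw
      exact H ⟨w, (U.Ua_cluster u0 hu0 w).mp hw⟩
    · rintro ⟨u, hu⟩ u'
      exact hu u'.1 ((U.Ua_cluster u.1 u.2 u'.1).mpr u'.2)
end

section
/- Simultaneous a priori belief updates by distinct agents commute: if U_b and U_c are a priori belief updates for distinct agents b and c applied to an introspective pointed model (M, v) with R_b(v) = R_c(v) = ∅, then (M ⊛_b U_b) ⊛_c U_c and (M ⊛_c U_c) ⊛_b U_b are isomorphic pointed models. -/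
theorem stmt16 {Agent AP W Wb Wnb Wc Wnc : Type} (b c : Agent) (hbc : b ≠ c)
    (M : KripkeModel Agent AP W) (v : W) (hM : Introspective M)
    (hb : ∀ w, ¬ M.R b v w) (hc : ∀ w, ¬ M.R c v w)
    (Ub : APBUpdate Agent AP Wb Wnb b) (Uc : APBUpdate Agent AP Wc Wnc c) :
    ∃ f : ((W ⊕ (↥Ub.Ua ⊕ Wnb)) ⊕ (↥Uc.Ua ⊕ Wnc)) ≃
          ((W ⊕ (↥Uc.Ua ⊕ Wnc)) ⊕ (↥Ub.Ua ⊕ Wnb)),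
      f (Sum.inl (Sum.inl v)) = Sum.inl (Sum.inl v) ∧
      (∀ i x y, (updatedModel c (updatedModel b M v Ub) (Sum.inl v) Uc).R i x y ↔
          (updatedModel b (updatedModel c M v Uc) (Sum.inl v) Ub).R i (f x) (f y)) ∧
      (∀ p x, (updatedModel c (updatedModel b M v Ub) (Sum.inl v) Uc).V p x ↔
          (updatedModel b (updatedModel c M v Uc) (Sum.inl v) Ub).V p (f x)) := by
  refine ⟨⟨fun x => match x with
      | .inl (.inl w) => .inl (.inl w)
      | .inl (.inr b0) => .inr b0
      | .inr c0 => .inl (.inr c0),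
    fun x => match x with
      | .inl (.inl w) => .inl (.inl w)
      | .inl (.inr c0) => .inr c0
      | .inr b0 => .inl (.inr b0),
    ?_, ?_⟩, rfl, ?_, ?_⟩
  · rintro ((w | b0) | c0) <;> rfl
  · rintro ((w | c0) | b0) <;> rfl
  · intro i x y
    rcases x with (w | (u | n)) | (u' | n') <;>
      rcases y with (w2 | (u2 | n2)) | (u2' | n2') <;>
      first
        | exact Iff.rfl
        | (show _ ↔ _ ∧ _
           exact ⟨fun h => ⟨h.1, congrArg Sum.inl h.2⟩,
             fun h => ⟨h.1, Sum.inl.inj h.2⟩⟩)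
        | (show _ ↔ _ ∧ _
           exact ⟨fun h => ⟨h.1, Sum.inl.inj h.2⟩,
             fun h => ⟨h.1, congrArg Sum.inl h.2⟩⟩)
        | (show False ↔ _ ∧ _
           exact ⟨fun h => h.elim, fun h => absurd h.2 (by simp)⟩)
        | (show _ ∧ _ ↔ False
           exact ⟨fun h => absurd h.2 (by simp), fun h => h.elim⟩)
  · intro p x
    rcases x with (w | (u | n)) | (u' | n') <;> rfl
end

section
/- If, after agent a's a priori update triggered by a public statement B_b φ, agent a believes agent b's beliefs are inconsistent (i.e., no world in U^a has an outgoing b-arrow in the updated model), then privately re-applying the announcement B_b φ to a's part of the model does not change agent a's beliefs in any formula ψ not involving modalities B_c for c ∉ {a, b}: (M|B_b φ) ⊛_a U, v ⊨ B_a ψ iff ((M|B_b φ) ⊛_a U) |^a B_b φ, v ⊨ B_a ψ. -/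
lemma aux_pres {Agent AP W Wa Wna : Type} (a b : Agent) (hab : b ≠ a)
    (M' : KripkeModel Agent AP W) (v : W) (U : APBUpdate Agent AP Wa Wna a)
    (χ : Formula Agent AP)
    (key : ∀ (u : ↥U.Ua) (y : W ⊕ (↥U.Ua ⊕ Wna)),
      ¬ (updatedModel a M' v U).R b (Sum.inr (Sum.inl u)) y)
    (hχ : ∀ u : ↥U.Ua, truth (updatedModel a M' v U) (Sum.inr (Sum.inl u)) χ) :
    ∀ ψ : Formula Agent AP, onlyAgents {a, b} ψ → ∀ u : ↥U.Ua,
      (truth (updatedModel a M' v U) (Sum.inr (Sum.inl u)) ψ ↔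
       truth (privAnnounce (updatedModel a M' v U) χ) (Sum.inr (Sum.inl u)) ψ) := by
  intro ψ
  induction ψ with
  | atom p => intro _ u; exact Iff.rfl
  | bot => intro _ u; exact Iff.rfl
  | neg φ ih => intro h u; exact not_congr (ih h u)
  | and φ ψ ihφ ihψ => intro h u; exact and_congr (ihφ h.1 u) (ihψ h.2 u)
  | box i φ ih =>
    intro h u
    obtain ⟨hi, hφ⟩ := h
    have hi' : i = a ∨ i = b := by simpa using hi
    rcases hi' with rfl | rfl
    · -- i = a
      constructor
      · intro H y hy
        match y with
        | Sum.inl w => exact hy.1.elim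
        | Sum.inr (Sum.inl u') => exact (ih hφ u').mp (H _ rfl)
        | Sum.inr (Sum.inr n) => exact absurd rfl hy.1.1
      · intro H y hy
        match y with
        | Sum.inl w => exact hy.elim
        | Sum.inr (Sum.inl u') =>
          exact (ih hφ u').mpr (H _ ⟨rfl, fun _ => hχ u, fun _ => hχ u'⟩)
        | Sum.inr (Sum.inr n) => exact absurd rfl hy.1
    · -- i = b
      constructor
      · intro _ y hy; exact (key u y hy.1).elim
      · intro _ y hy; exact (key u y hy).elim

theorem stmt17 {Agent AP W Wa Wna : Type} (a b : Agent) (hab : b ≠ a)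
    (M : KripkeModel Agent AP W) (φ : Formula Agent AP) (v : W)
    (hv : truth M v (.box b φ))
    (U : APBUpdate Agent AP Wa Wna a)
    (hM : Introspective M)
    (h1 : truth (pubAnnounce M (.box b φ)) ⟨v, hv⟩ (.box a .bot))
    (h2 : truth (updatedModel a (pubAnnounce M (.box b φ)) ⟨v, hv⟩ U)
        (Sum.inl ⟨v, hv⟩) (.box a (.box b .bot))) :
    ∀ ψ : Formula Agent AP, onlyAgents {a, b} ψ →
      (truth (updatedModel a (pubAnnounce M (.box b φ)) ⟨v, hv⟩ U)
          (Sum.inl ⟨v, hv⟩) (.box a ψ) ↔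
       truth (privAnnounce (updatedModel a (pubAnnounce M (.box b φ)) ⟨v, hv⟩ U)
          (.box b φ)) (Sum.inl ⟨v, hv⟩) (.box a ψ)) := by
  intro ψ hψ
  have key : ∀ (u : ↥U.Ua) (y : _),
      ¬ (updatedModel a (pubAnnounce M (.box b φ)) ⟨v, hv⟩ U).R b (Sum.inr (Sum.inl u)) y :=
    fun u y hy => h2 (Sum.inr (Sum.inl u)) ⟨rfl, rfl⟩ y hy
  have hχ : ∀ u : ↥U.Ua, truth (updatedModel a (pubAnnounce M (.box b φ)) ⟨v, hv⟩ U)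
      (Sum.inr (Sum.inl u)) (Formula.box b φ) :=
    fun u y hy => (key u y hy).elim
  have main := aux_pres a b hab (pubAnnounce M (.box b φ)) ⟨v, hv⟩ U (.box b φ) key hχ ψ hψ
  constructor
  · intro H y hy
    match y with
    | Sum.inl w => exact (h1 w hy.1).elim
    | Sum.inr (Sum.inl u) => exact (main u).mp (H _ ⟨rfl, rfl⟩)
    | Sum.inr (Sum.inr n) => exact hy.1.elim
  · intro H y hy
    match y with
    | Sum.inl w => exact (h1 w hy).elim
    | Sum.inr (Sum.inl u) =>
      exact (main u).mpr (H _ ⟨⟨rfl, rfl⟩, fun h => h.elim, fun _ => hχ u⟩)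
    | Sum.inr (Sum.inr n) => exact hy.elim
end
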